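/- arXiv:2110.03429 — 6 statements merged into one kernel-verified Lean document; each statement's English description precedes it below -/
import Mathlib

section
/- For β > 2 and 2 ≤ p < β, the integral ∫_e^∞ x^{p-1-β} (ln x)^{-1} dx is bounded above by C·(1 + |ln(β - p)|) for some constant C depending only on β, and bounded below by c·|ln(β - p)| for p sufficiently close to β. -/
/-! Substituting `x = exp t` turns the integral into the exponential integral
`E₁(a) = ∫₁^∞ e^{-at} / t dt` with `a = β - p`. For `a < 1` split at `t = 1/a`: on `[1, 1/a]`
the factor `e^{-at}` lies between `e^{-1}` and `1`, so that piece is comparable to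
`∫₁^{1/a} dt / t = |log a|`, while the tail is at most `e^{-1}`. For `a ≥ 1` the whole integral
is at most `e^{-a} / a ≤ 1`. -/

open MeasureTheory Real Set

noncomputable def expIntegralE₁ (a : ℝ) : ℝ := ∫ t in Ioi 1, exp (-a * t) * t⁻¹

theorem integral_rpow_mul_inv_log_eq_expIntegralE₁ (a : ℝ) :
    ∫ x in Ioi (exp 1), x ^ (-1 - a) * (log x)⁻¹ = expIntegralE₁ a := by
  rw [expIntegralE₁, ← log_exp 1, ← integral_comp_log_Ioi _ (exp_pos 1), log_exp]
  refine setIntegral_congr_fun measurableSet_Ioi fun x hx => ?_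
  have hx0 : 0 < x := (exp_pos 1).trans hx
  rw [smul_eq_mul, rpow_def_of_pos hx0, sub_eq_add_neg, mul_add, exp_add, mul_neg_one,
    exp_neg, exp_log hx0]
  ring_nf

section ExpIntegralE₁

variable {a b c : ℝ}

theorem integrableOn_exp_mul_inv_Ioi (ha : 0 < a) (hc : 0 < c) :
    IntegrableOn (fun t => exp (-a * t) * t⁻¹) (Ioi c) := by
  refine (integrableOn_exp_mul_Ioi (neg_lt_zero.2 ha) c).mul_bdd (c := c⁻¹)
    measurable_inv.aestronglyMeasurable ?_
  filter_upwards [ae_restrict_mem measurableSet_Ioi] with t (ht : c < t)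
  rw [norm_inv, norm_of_nonneg (hc.trans ht).le]
  exact inv_anti₀ hc ht.le

theorem integral_exp_mul_inv_Ioi_nonneg (hc : 0 ≤ c) :
    0 ≤ ∫ t in Ioi c, exp (-a * t) * t⁻¹ :=
  setIntegral_nonneg measurableSet_Ioi fun t (ht : c < t) =>
    mul_nonneg (exp_pos _).le (inv_nonneg.2 (hc.trans ht.le))

theorem integral_exp_mul_inv_Ioi_le (ha : 0 < a) (hc : 0 < c) :
    ∫ t in Ioi c, exp (-a * t) * t⁻¹ ≤ exp (-a * c) / (a * c) := by
  calc ∫ t in Ioi c, exp (-a * t) * t⁻¹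
      ≤ ∫ t in Ioi c, exp (-a * t) * c⁻¹ := by
        refine setIntegral_mono_on (integrableOn_exp_mul_inv_Ioi ha hc)
          ((integrableOn_exp_mul_Ioi (neg_lt_zero.2 ha) c).mul_const _) measurableSet_Ioi
          fun t (ht : c < t) => ?_
        gcongr
    _ = exp (-a * c) / (a * c) := by
        rw [integral_mul_const, integral_exp_mul_Ioi (neg_lt_zero.2 ha)]
        field_simp

theorem intervalIntegrable_exp_mul_inv (hc : 0 < c) (hcb : c ≤ b) :
    IntervalIntegrable (fun t => exp (-a * t) * t⁻¹) volume c b := by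
  refine ContinuousOn.intervalIntegrable fun t ht => ?_
  rw [uIcc_of_le hcb] at ht
  have : t ≠ 0 := (hc.trans_le ht.1).ne'
  fun_prop (disch := assumption)

theorem integral_exp_mul_inv_le_log (ha : 0 ≤ a) (hc : 0 < c) (hcb : c ≤ b) :
    ∫ t in c..b, exp (-a * t) * t⁻¹ ≤ log (b / c) := by
  have h0 : (0 : ℝ) ∉ uIcc c b := notMem_uIcc_of_lt hc (hc.trans_le hcb)
  rw [← integral_inv h0]
  refine intervalIntegral.integral_mono_on hcb (intervalIntegrable_exp_mul_inv hc hcb)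
    (intervalIntegrable_inv_iff.2 (Or.inr h0)) fun t ht => ?_
  have ht0 : 0 < t := hc.trans_le ht.1
  refine mul_le_of_le_one_left (inv_nonneg.2 ht0.le) (exp_le_one_iff.2 ?_)
  nlinarith

theorem exp_mul_log_le_integral_exp_mul_inv (ha : 0 ≤ a) (hc : 0 < c) (hcb : c ≤ b) :
    exp (-a * b) * log (b / c) ≤ ∫ t in c..b, exp (-a * t) * t⁻¹ := by
  have h0 : (0 : ℝ) ∉ uIcc c b := notMem_uIcc_of_lt hc (hc.trans_le hcb)
  rw [← integral_inv h0, ← intervalIntegral.integral_const_mul]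
  refine intervalIntegral.integral_mono_on hcb
    ((intervalIntegrable_inv_iff.2 (Or.inr h0)).const_mul _)
    (intervalIntegrable_exp_mul_inv hc hcb) fun t ht => ?_
  have ht0 : 0 < t := hc.trans_le ht.1
  exact mul_le_mul_of_nonneg_right (exp_le_exp.2 (by nlinarith [ht.2])) (inv_nonneg.2 ht0.le)

theorem expIntegralE₁_eq_integral_add_integral_Ioi (ha : 0 < a) (hb : 0 < b) :
    expIntegralE₁ a =
      (∫ t in 1..b, exp (-a * t) * t⁻¹) + ∫ t in Ioi b, exp (-a * t) * t⁻¹ :=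
  (intervalIntegral.integral_interval_add_Ioi (integrableOn_exp_mul_inv_Ioi ha one_pos)
    (integrableOn_exp_mul_inv_Ioi ha hb)).symm

theorem expIntegralE₁_le_one_add_abs_log (ha : 0 < a) : expIntegralE₁ a ≤ 1 + |log a| := by
  rcases le_or_gt 1 a with ha1 | ha1
  · calc expIntegralE₁ a ≤ exp (-a * 1) / (a * 1) := integral_exp_mul_inv_Ioi_le ha one_pos
      _ ≤ 1 := by
        rw [mul_one, mul_one, div_le_one ha, exp_neg]
        exact (inv_le_one_of_one_le₀ (one_le_exp ha.le)).trans ha1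
      _ ≤ 1 + |log a| := le_add_of_nonneg_right (abs_nonneg _)
  · have hinv : 1 ≤ a⁻¹ := one_le_inv₀ ha |>.2 ha1.le
    rw [expIntegralE₁_eq_integral_add_integral_Ioi ha (inv_pos.2 ha), add_comm 1]
    gcongr
    · calc ∫ t in 1..a⁻¹, exp (-a * t) * t⁻¹ ≤ log (a⁻¹ / 1) :=
            integral_exp_mul_inv_le_log ha.le one_pos hinv
        _ = |log a| := by rw [div_one, log_inv, abs_of_neg (log_neg ha ha1)]
    · calc ∫ t in Ioi a⁻¹, exp (-a * t) * t⁻¹ ≤ exp (-a * a⁻¹) / (a * a⁻¹) :=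
            integral_exp_mul_inv_Ioi_le ha (inv_pos.2 ha)
        _ ≤ 1 := by
          rw [neg_mul, mul_inv_cancel₀ ha.ne', div_one, exp_le_one_iff]
          norm_num

theorem exp_neg_one_mul_abs_log_le_expIntegralE₁ (ha : 0 < a) (ha1 : a < 1) :
    exp (-1) * |log a| ≤ expIntegralE₁ a := by
  have hinv : 1 ≤ a⁻¹ := one_le_inv₀ ha |>.2 ha1.le
  rw [expIntegralE₁_eq_integral_add_integral_Ioi ha (inv_pos.2 ha)]
  calc exp (-1) * |log a| = exp (-a * a⁻¹) * log (a⁻¹ / 1) := by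
        rw [neg_mul, mul_inv_cancel₀ ha.ne', div_one, log_inv, abs_of_neg (log_neg ha ha1)]
    _ ≤ ∫ t in 1..a⁻¹, exp (-a * t) * t⁻¹ :=
        exp_mul_log_le_integral_exp_mul_inv ha.le one_pos hinv
    _ ≤ _ := le_add_of_nonneg_right (integral_exp_mul_inv_Ioi_nonneg (inv_pos.2 ha).le)

end ExpIntegralE₁

theorem stmt_2_general (β : ℝ) :
    (∃ C > (0 : ℝ), ∀ p : ℝ, 2 ≤ p → p < β →
      ∫ x in Set.Ioi (Real.exp 1), x ^ (p - 1 - β) * (Real.log x)⁻¹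
        ≤ C * (1 + |Real.log (β - p)|)) ∧
    (∃ c > (0 : ℝ), ∃ δ > (0 : ℝ), ∀ p : ℝ, 2 ≤ p → p < β → β - p < δ →
      c * |Real.log (β - p)|
        ≤ ∫ x in Set.Ioi (Real.exp 1), x ^ (p - 1 - β) * (Real.log x)⁻¹) := by
  have hexp (p : ℝ) : p - 1 - β = -1 - (β - p) := by ring
  refine ⟨⟨1, one_pos, fun p _ hpβ => ?_⟩,
    ⟨exp (-1), exp_pos _, 1, one_pos, fun p _ hpβ hδ => ?_⟩⟩
  · rw [hexp, integral_rpow_mul_inv_log_eq_expIntegralE₁, one_mul]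
    exact expIntegralE₁_le_one_add_abs_log (sub_pos.2 hpβ)
  · rw [hexp, integral_rpow_mul_inv_log_eq_expIntegralE₁]
    exact exp_neg_one_mul_abs_log_le_expIntegralE₁ (sub_pos.2 hpβ) hδ

theorem stmt_2 (β : ℝ) (hβ : 2 < β) :
    (∃ C > (0 : ℝ), ∀ p : ℝ, 2 ≤ p → p < β →
      ∫ x in Set.Ioi (Real.exp 1), x ^ (p - 1 - β) * (Real.log x)⁻¹
        ≤ C * (1 + |Real.log (β - p)|)) ∧
    (∃ c > (0 : ℝ), ∃ δ > (0 : ℝ), ∀ p : ℝ, 2 ≤ p → p < β → β - p < δ →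
      c * |Real.log (β - p)|
        ≤ ∫ x in Set.Ioi (Real.exp 1), x ^ (p - 1 - β) * (Real.log x)⁻¹) :=
  stmt_2_general β
end

section
/- Let ξ be a real random variable with P(|ξ| > u) ≤ u^{-β} (ln u)^γ for u ≥ e, where β > 2 and γ > -1. Then there exists a constant C = C(β, γ) such that for all p ∈ [2, β), E|ξ|^p ≤ C · (β - p)^{-γ-1}. -/
/-!
By the layer-cake formula, `E|ξ|^p = p ∫₀^∞ t^(p-1) P(|ξ| > t) dt`. On `(0, e]` the probability
is at most `1`, which contributes at most `e^p`. On `(e, ∞)` the tail bound leaves the integrand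
`t^(-(β-p)-1) (log t)^γ`, and the substitution `t = e^s` turns it into `s^γ e^(-(β-p)s)` on
`(1, ∞)`, a truncated Gamma integral bounded by `Γ(γ+1) (β-p)^(-γ-1)`. The bounded term
`e^p ≤ e^β` is absorbed into the same power since `(β-p)^(-γ-1) ≥ (β-2)^(-γ-1)`.
-/

open MeasureTheory Real Set

lemma lintegral_rpow_mul_exp_neg_mul_Ioi {a r : ℝ} (ha : 0 < a) (hr : 0 < r) :
    ∫⁻ t in Ioi 0, ENNReal.ofReal (t ^ (a - 1) * exp (-(r * t))) =
      ENNReal.ofReal ((1 / r) ^ a * Gamma a) := by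
  have hval := integral_rpow_mul_exp_neg_mul_Ioi ha hr
  have hint : IntegrableOn (fun t => t ^ (a - 1) * exp (-(r * t))) (Ioi 0) :=
    .of_integral_ne_zero (by rw [hval]; exact (mul_pos (by positivity) (Gamma_pos_of_pos ha)).ne')
  rw [← hval, ofReal_integral_eq_lintegral_ofReal hint]
  filter_upwards [ae_restrict_mem measurableSet_Ioi] with t (ht : 0 < t)
  positivity

lemma lintegral_rpow_mul_log_rpow_Ioi_exp_one_le {γ r : ℝ} (hγ : -1 < γ) (hr : 0 < r) :
    ∫⁻ t in Ioi (exp 1), ENNReal.ofReal (t ^ (-r - 1) * log t ^ γ) ≤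
      ENNReal.ofReal (Gamma (γ + 1) * r ^ (-γ - 1)) := by
  have hsubst : ∀ s : ℝ,
      ENNReal.ofReal |exp s| * ENNReal.ofReal (exp s ^ (-r - 1) * log (exp s) ^ γ) =
        ENNReal.ofReal (s ^ (γ + 1 - 1) * exp (-(r * s))) := by
    intro s
    rw [← ENNReal.ofReal_mul (abs_nonneg _), abs_of_pos (exp_pos s), log_exp, ← exp_mul,
      ← mul_assoc, ← exp_add, add_sub_cancel_right, mul_comm]
    ring_nf
  have hGamma : (1 / r) ^ (γ + 1) = r ^ (-γ - 1) := by
    rw [one_div, inv_rpow hr.le, ← rpow_neg hr.le, neg_add']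
  rw [← image_exp_Ioi, lintegral_image_eq_lintegral_abs_deriv_mul measurableSet_Ioi
    (fun s _ => (hasDerivAt_exp s).hasDerivWithinAt) exp_injective.injOn]
  simp_rw [hsubst]
  calc _ ≤ ∫⁻ s in Ioi 0, ENNReal.ofReal (s ^ (γ + 1 - 1) * exp (-(r * s))) :=
        lintegral_mono_set (Ioi_subset_Ioi zero_le_one)
    _ = _ := by rw [lintegral_rpow_mul_exp_neg_mul_Ioi (by linarith) hr, hGamma, mul_comm]

section

variable {Ω : Type*} [MeasurableSpace Ω] {μ : Measure Ω} {X : Ω → ℝ}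

lemma setLIntegral_Ioc_meas_lt_mul_rpow_le [IsProbabilityMeasure μ] {b p : ℝ} (hb : 0 ≤ b)
    (hp : 1 ≤ p) :
    ∫⁻ t in Ioc 0 b, μ {ω | t < X ω} * ENNReal.ofReal (t ^ (p - 1)) ≤ ENNReal.ofReal (b ^ p) := by
  calc _ ≤ ∫⁻ _ in Ioc 0 b, ENNReal.ofReal (b ^ (p - 1)) := by
        refine setLIntegral_mono' measurableSet_Ioc fun t ht => ?_
        exact (mul_le_mul' prob_le_one
          (ENNReal.ofReal_le_ofReal (rpow_le_rpow ht.1.le ht.2 (by linarith)))).trans_eq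
          (one_mul _)
    _ = ENNReal.ofReal (b ^ p) := by
        rw [setLIntegral_const, Real.volume_Ioc, sub_zero, ← ENNReal.ofReal_mul (by positivity),
          ← rpow_add_one' hb (by linarith), sub_add_cancel]

lemma setLIntegral_Ioi_exp_one_meas_lt_mul_rpow_le [IsFiniteMeasure μ] {β γ p : ℝ} (hγ : -1 < γ)
    (hpβ : p < β)
    (htail : ∀ u : ℝ, exp 1 ≤ u → (μ {ω | u < X ω}).toReal ≤ u ^ (-β) * log u ^ γ) :
    ∫⁻ t in Ioi (exp 1), μ {ω | t < X ω} * ENNReal.ofReal (t ^ (p - 1)) ≤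
      ENNReal.ofReal (Gamma (γ + 1) * (β - p) ^ (-γ - 1)) := by
  refine le_trans (setLIntegral_mono' measurableSet_Ioi fun t (ht : exp 1 < t) => ?_)
    (lintegral_rpow_mul_log_rpow_Ioi_exp_one_le hγ (sub_pos.2 hpβ))
  have ht0 : 0 < t := (exp_pos 1).trans ht
  have hlog : 0 ≤ log t := zero_le_one.trans ((le_log_iff_exp_le ht0).2 ht.le)
  have hμ : μ {ω | t < X ω} ≤ ENNReal.ofReal (t ^ (-β) * log t ^ γ) := by
    rw [← ENNReal.ofReal_toReal (measure_ne_top μ _)]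
    exact ENNReal.ofReal_le_ofReal (htail t ht.le)
  calc μ {ω | t < X ω} * ENNReal.ofReal (t ^ (p - 1))
      ≤ ENNReal.ofReal (t ^ (-β) * log t ^ γ) * ENNReal.ofReal (t ^ (p - 1)) := by gcongr
    _ = ENNReal.ofReal (t ^ (-(β - p) - 1) * log t ^ γ) := by
        rw [← ENNReal.ofReal_mul (mul_nonneg (by positivity) (rpow_nonneg hlog _)),
          mul_right_comm, ← rpow_add ht0]
        ring_nf

end

lemma mul_exp_add_mul_rpow_le {β γ p c : ℝ} (hc : 0 ≤ c) (hγ : -1 < γ) (hp : 2 ≤ p)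
    (hpβ : p < β) :
    p * (exp p + c * (β - p) ^ (-γ - 1)) ≤
      β * (exp β * (β - 2) ^ (γ + 1) + c) * (β - p) ^ (-γ - 1) := by
  have hβ2 : 0 < β - 2 := by linarith
  have hexp : exp p ≤ exp β * (β - 2) ^ (γ + 1) * (β - p) ^ (-γ - 1) :=
    calc exp p ≤ exp β * ((β - 2) ^ (γ + 1) * (β - 2) ^ (-γ - 1)) := by
          rw [← rpow_add hβ2, show γ + 1 + (-γ - 1) = 0 by ring, rpow_zero, mul_one]
          exact exp_le_exp.2 hpβ.le
      _ ≤ _ := by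
          rw [← mul_assoc]
          exact mul_le_mul_of_nonneg_left
            (rpow_le_rpow_of_nonpos (sub_pos.2 hpβ) (by linarith) (by linarith)) (by positivity)
  calc p * (exp p + c * (β - p) ^ (-γ - 1))
      ≤ β * (exp β * (β - 2) ^ (γ + 1) * (β - p) ^ (-γ - 1) + c * (β - p) ^ (-γ - 1)) := by
        gcongr
        linarith
    _ = _ := by ring

theorem stmt_4 {Ω : Type*} [MeasurableSpace Ω] (μ : Measure Ω) [IsProbabilityMeasure μ]
    (ξ : Ω → ℝ) (hξ : Measurable ξ) (β γ : ℝ) (hβ : 2 < β) (hγ : -1 < γ)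
    (htail : ∀ u : ℝ, Real.exp 1 ≤ u →
      (μ {ω | u < |ξ ω|}).toReal ≤ u ^ (-β) * Real.log u ^ γ) :
    ∃ C > (0 : ℝ), ∀ p : ℝ, 2 ≤ p → p < β →
      ∫⁻ ω, ENNReal.ofReal (|ξ ω| ^ p) ∂μ ≤ ENNReal.ofReal (C * (β - p) ^ (-γ - 1)) := by
  have hΓ : 0 < Gamma (γ + 1) := Gamma_pos_of_pos (by linarith)
  have hβ2 : 0 < β - 2 := by linarith
  refine ⟨β * (exp β * (β - 2) ^ (γ + 1) + Gamma (γ + 1)), by positivity, fun p hp hpβ => ?_⟩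
  have hp0 : 0 < p := by linarith
  rw [lintegral_rpow_eq_lintegral_meas_lt_mul μ (ae_of_all _ fun ω => abs_nonneg (ξ ω))
      hξ.abs.aemeasurable hp0, ← Ioc_union_Ioi_eq_Ioi (exp_pos 1).le,
    lintegral_union measurableSet_Ioi Ioc_disjoint_Ioi_same]
  calc _ ≤ ENNReal.ofReal p * (ENNReal.ofReal (exp 1 ^ p) +
        ENNReal.ofReal (Gamma (γ + 1) * (β - p) ^ (-γ - 1))) := by
        gcongr
        · exact setLIntegral_Ioc_meas_lt_mul_rpow_le (exp_pos 1).le (by linarith)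
        · exact setLIntegral_Ioi_exp_one_meas_lt_mul_rpow_le hγ hpβ htail
    _ = ENNReal.ofReal (p * (exp p + Gamma (γ + 1) * (β - p) ^ (-γ - 1))) := by
        have : 0 < β - p := by linarith
        rw [exp_one_rpow, ← ENNReal.ofReal_add (by positivity) (by positivity),
          ← ENNReal.ofReal_mul hp0.le]
    _ ≤ _ := ENNReal.ofReal_le_ofReal (mul_exp_add_mul_rpow_le hΓ.le hγ hp hpβ)
end

section
/- Let ξ be a nonzero real random variable and ψ : [2, b) → (0, ∞) with sup_{p ∈ [2,b)} (E|ξ|^p)^{1/p} / ψ(p) ≤ 1. Define ν(p) = p ln ψ(p) and ν*(y) = sup_{p ∈ [2,b)} (p y − ν(p)). Then for every z ≥ e, P(|ξ| > z) ≤ exp(−ν*(ln z)). -/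
open MeasureTheory Real

theorem stmt_5 {Ω : Type*} [MeasurableSpace Ω] (μ : Measure Ω) [IsProbabilityMeasure μ]
    (ξ : Ω → ℝ) (hξ : Measurable ξ) (hne : ¬ ξ =ᵐ[μ] 0)
    (b : EReal) (hb : (2 : EReal) < b) (ψ : ℝ → ℝ)
    (hψpos : ∀ p : ℝ, 2 ≤ p → (p : EReal) < b → 0 < ψ p)
    (hnorm : ∀ p : ℝ, 2 ≤ p → (p : EReal) < b →
      (∫⁻ ω, ENNReal.ofReal (|ξ ω| ^ p) ∂μ) ^ (1 / p) ≤ ENNReal.ofReal (ψ p)) :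
    ∀ z : ℝ, Real.exp 1 ≤ z →
      (μ {ω | z < |ξ ω|}).toReal ≤
        Real.exp (-(⨆ p : {p : ℝ // 2 ≤ p ∧ (p : EReal) < b},
          (p.1 * Real.log z - p.1 * Real.log (ψ p.1)))) := by
  intro z hz
  have hz0 : (0:ℝ) < z := lt_of_lt_of_le (Real.exp_pos 1) hz
  -- key pointwise bound
  have key : ∀ p : ℝ, 2 ≤ p → (p : EReal) < b →
      (μ {ω | z < |ξ ω|}).toReal ≤ Real.exp (-(p * Real.log z - p * Real.log (ψ p))) := by
    intro p hp2 hpb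
    have hp0 : (0:ℝ) < p := by linarith
    have hψp : 0 < ψ p := hψpos p hp2 hpb
    have hint : (∫⁻ ω, ENNReal.ofReal (|ξ ω| ^ p) ∂μ) ≤ ENNReal.ofReal (ψ p ^ p) := by
      have h1 := hnorm p hp2 hpb
      have h2 : ((∫⁻ ω, ENNReal.ofReal (|ξ ω| ^ p) ∂μ) ^ (1 / p)) ^ p
          ≤ ENNReal.ofReal (ψ p) ^ p := ENNReal.rpow_le_rpow h1 hp0.le
      rwa [← ENNReal.rpow_mul, one_div, inv_mul_cancel₀ hp0.ne', ENNReal.rpow_one,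
        ENNReal.ofReal_rpow_of_pos hψp] at h2
    have hzp : (0:ℝ) < z ^ p := Real.rpow_pos_of_pos hz0 p
    have hmeas : AEMeasurable (fun ω => ENNReal.ofReal (|ξ ω| ^ p)) μ :=
      ((hξ.abs.pow measurable_const).ennreal_ofReal).aemeasurable
    have hmarkov : μ {ω | z < |ξ ω|} ≤
        (∫⁻ ω, ENNReal.ofReal (|ξ ω| ^ p) ∂μ) / ENNReal.ofReal (z ^ p) := by
      refine le_trans (measure_mono ?_) (meas_ge_le_lintegral_div hmeas ?_ ?_)
      · intro ω hω
        exact ENNReal.ofReal_le_ofReal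
          (Real.rpow_le_rpow hz0.le (le_of_lt hω) hp0.le)
      · simp [ENNReal.ofReal_eq_zero, not_le, hzp]
      · exact ENNReal.ofReal_ne_top
    have hbound : μ {ω | z < |ξ ω|} ≤ ENNReal.ofReal (ψ p ^ p / z ^ p) := by
      refine hmarkov.trans ?_
      rw [ENNReal.ofReal_div_of_pos hzp]
      exact ENNReal.div_le_div_right hint _
    have := ENNReal.toReal_mono ENNReal.ofReal_ne_top hbound
    rw [ENNReal.toReal_ofReal (by positivity)] at this
    refine this.trans_eq ?_
    rw [Real.rpow_def_of_pos hψp, Real.rpow_def_of_pos hz0, ← Real.exp_sub]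
    ring_nf
  have hne' : Nonempty {p : ℝ // 2 ≤ p ∧ (p : EReal) < b} := ⟨⟨2, le_refl 2, by exact_mod_cast hb⟩⟩
  set f : {p : ℝ // 2 ≤ p ∧ (p : EReal) < b} → ℝ :=
    fun p => p.1 * Real.log z - p.1 * Real.log (ψ p.1) with hf
  have hμ1 : (μ {ω | z < |ξ ω|}).toReal ≤ 1 := by
    have := ENNReal.toReal_mono ENNReal.one_ne_top (prob_le_one (μ := μ) (s := {ω | z < |ξ ω|}))
    simpa using this
  by_cases hbdd : BddAbove (Set.range f)
  · by_cases hμ0 : (μ {ω | z < |ξ ω|}).toReal ≤ 0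
    · exact hμ0.trans (Real.exp_pos _).le
    · push_neg at hμ0
      have hlog : ∀ q : {p : ℝ // 2 ≤ p ∧ (p : EReal) < b},
          f q ≤ -Real.log ((μ {ω | z < |ξ ω|}).toReal) := by
        intro q
        have h := key q.1 q.2.1 q.2.2
        have := Real.log_le_log hμ0 h
        rw [Real.log_exp] at this
        simp only [hf]
        linarith
      have hsup := ciSup_le hlog
      calc (μ {ω | z < |ξ ω|}).toReal
          = Real.exp (Real.log ((μ {ω | z < |ξ ω|}).toReal)) := (Real.exp_log hμ0).symm
        _ ≤ Real.exp (-(⨆ q, f q)) := Real.exp_le_exp.mpr (by linarith)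
  · rw [Real.iSup_of_not_bddAbove hbdd]
    simpa using hμ1
end

section
/- Let β > 2, γ > -1, and K > 0. Suppose a random variable S satisfies E|S|^p ≤ K · (β - p)^{-γ-1} for all p ∈ [2, β). Then there is a constant C = C(β, γ, K) such that P(|S| > u) ≤ C · u^{-β} (ln u)^{γ+1} for all u ≥ e. -/
open MeasureTheory Real

lemma toReal_measure_lt_abs_le_of_lintegral_rpow_le {Ω : Type*} [MeasurableSpace Ω]
    {μ : Measure Ω} {S : Ω → ℝ} (hS : Measurable S) {u p M : ℝ} (hu : 0 < u) (hp : 0 ≤ p)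
    (hM : 0 ≤ M) (hmom : ∫⁻ ω, ENNReal.ofReal (|S ω| ^ p) ∂μ ≤ ENNReal.ofReal M) :
    (μ {ω | u < |S ω|}).toReal ≤ M / u ^ p := by
  have hup : 0 < u ^ p := rpow_pos_of_pos hu p
  have hsub : {ω | u < |S ω|} ⊆ {ω | ENNReal.ofReal (u ^ p) ≤ ENNReal.ofReal (|S ω| ^ p)} :=
    fun ω hω => ENNReal.ofReal_le_ofReal (rpow_le_rpow hu.le (le_of_lt hω) hp)
  refine ENNReal.toReal_le_of_le_ofReal (div_nonneg hM hup.le) ?_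
  calc μ {ω | u < |S ω|}
      ≤ μ {ω | ENNReal.ofReal (u ^ p) ≤ ENNReal.ofReal (|S ω| ^ p)} := measure_mono hsub
    _ ≤ (∫⁻ ω, ENNReal.ofReal (|S ω| ^ p) ∂μ) / ENNReal.ofReal (u ^ p) :=
        meas_ge_le_lintegral_div (hS.abs.pow_const p).ennreal_ofReal.aemeasurable
          (ENNReal.ofReal_pos.mpr hup).ne' ENNReal.ofReal_ne_top
    _ ≤ ENNReal.ofReal M / ENNReal.ofReal (u ^ p) := by gcongr
    _ = ENNReal.ofReal (M / u ^ p) := (ENNReal.ofReal_div_of_pos hup).symm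

lemma rpow_sub_div_log {u : ℝ} (hu : 0 < u) (hlog : log u ≠ 0) (β a : ℝ) :
    u ^ (β - a / log u) = exp (-a) * u ^ β := by
  rw [rpow_sub hu, rpow_def_of_pos hu (a / log u), mul_div_cancel₀ a hlog, exp_neg]
  ring

/-- Markov's inequality at `p = β - a / log u`, where `u ^ p = e ^ (-a) * u ^ β` and
`(β - p) ^ (-a) = (log u / a) ^ a`. -/
lemma toReal_measure_lt_abs_le_of_moment_bound {Ω : Type*} [MeasurableSpace Ω]
    {μ : Measure Ω} {S : Ω → ℝ} (hS : Measurable S) {β a K : ℝ} (hβ : 2 < β) (ha : 0 < a)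
    (hK : 0 ≤ K) (hmom : ∀ p : ℝ, 2 ≤ p → p < β →
      ∫⁻ ω, ENNReal.ofReal (|S ω| ^ p) ∂μ ≤ ENNReal.ofReal (K * (β - p) ^ (-a)))
    {u : ℝ} (hu : 1 < u) (hlog : a / (β - 2) ≤ log u) :
    (μ {ω | u < |S ω|}).toReal ≤ K * exp a * a ^ (-a) * u ^ (-β) * log u ^ a := by
  have ht : 0 < log u := log_pos hu
  set p := β - a / log u
  have hp2 : 2 ≤ p := by
    have : a / log u ≤ β - 2 :=
      (div_le_iff₀ ht).2 (by rwa [div_le_iff₀ (sub_pos.2 hβ), mul_comm] at hlog)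
    linarith
  have hβp : β - p = a / log u := sub_sub_cancel β _
  have hpβ : 0 < β - p := hβp ▸ div_pos ha ht
  calc (μ {ω | u < |S ω|}).toReal
      ≤ K * (β - p) ^ (-a) / u ^ p :=
        toReal_measure_lt_abs_le_of_lintegral_rpow_le hS (by linarith) (by linarith)
          (mul_nonneg hK (rpow_nonneg hpβ.le _)) (hmom p hp2 (by linarith))
    _ = K * exp a * a ^ (-a) * u ^ (-β) * log u ^ a := by
        rw [hβp, rpow_sub_div_log (by linarith) ht.ne', div_rpow ha.le ht.le,
          rpow_neg ht.le a, rpow_neg (by linarith : 0 ≤ u), exp_neg]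
        field_simp

lemma one_le_exp_mul_rpow_neg_mul_log_rpow {u β a L : ℝ} (hu : 0 < u) (hβ : 0 ≤ β) (ha : 0 ≤ a)
    (hlog : 1 ≤ log u) (hL : log u ≤ L) :
    1 ≤ exp (β * L) * u ^ (-β) * log u ^ a := by
  have hdecay : 1 ≤ exp (β * L) * u ^ (-β) := by
    rw [rpow_def_of_pos hu, ← exp_add, one_le_exp_iff]
    nlinarith
  exact one_le_mul_of_one_le_of_one_le hdecay (one_le_rpow hlog ha)

theorem stmt_6 {Ω : Type*} [MeasurableSpace Ω] (μ : Measure Ω) [IsProbabilityMeasure μ]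
    (S : Ω → ℝ) (hS : Measurable S) (β γ K : ℝ) (hβ : 2 < β) (hγ : -1 < γ) (hK : 0 < K)
    (hmom : ∀ p : ℝ, 2 ≤ p → p < β →
      ∫⁻ ω, ENNReal.ofReal (|S ω| ^ p) ∂μ ≤ ENNReal.ofReal (K * (β - p) ^ (-γ - 1))) :
    ∃ C > (0 : ℝ), ∀ u : ℝ, Real.exp 1 ≤ u →
      (μ {ω | u < |S ω|}).toReal ≤ C * u ^ (-β) * Real.log u ^ (γ + 1) := by
  have ha : 0 < γ + 1 := by linarith
  set L := (γ + 1) / (β - 2)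
  have hmom' : ∀ p : ℝ, 2 ≤ p → p < β →
      ∫⁻ ω, ENNReal.ofReal (|S ω| ^ p) ∂μ ≤ ENNReal.ofReal (K * (β - p) ^ (-(γ + 1))) := by
    simpa only [neg_add'] using hmom
  refine ⟨max (exp (β * L)) (K * exp (γ + 1) * (γ + 1) ^ (-(γ + 1))),
    lt_max_of_lt_left (exp_pos _), fun u hu => ?_⟩
  have hu1 : 1 < u := (one_lt_exp_iff.2 one_pos).trans_le hu
  have hlog : 1 ≤ log u := by simpa using log_le_log (exp_pos 1) hu
  -- For `log u < L` the exponent `β - (γ + 1) / log u` drops below `2`; there `P ≤ 1` suffices.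
  rcases le_total L (log u) with hL | hL
  · calc (μ {ω | u < |S ω|}).toReal
        ≤ K * exp (γ + 1) * (γ + 1) ^ (-(γ + 1)) * u ^ (-β) * log u ^ (γ + 1) :=
          toReal_measure_lt_abs_le_of_moment_bound hS hβ ha hK.le hmom' hu1 hL
      _ ≤ _ := by gcongr; exact le_max_right _ _
  · calc (μ {ω | u < |S ω|}).toReal
        ≤ 1 := measureReal_le_one
      _ ≤ exp (β * L) * u ^ (-β) * log u ^ (γ + 1) :=
          one_le_exp_mul_rpow_neg_mul_log_rpow (by linarith) (by linarith) ha.le hlog hL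
      _ ≤ _ := by gcongr; exact le_max_left _ _
end

section
/- Let ξ be a centered real random variable with E ξ² < ∞, ξ_1, ξ_2, … independent copies, and S_n = n^{-1/2} Σ_{i=1}^n ξ_i. If for some fixed p ∈ [2, ∞) one has E|ξ|^p < ∞, then sup_n E|S_n|^p < ∞. -/
/-!
Write `T n = ξ 0 + ⋯ + ξ (n - 1)`. For `p ≥ 2` the derivative `p |x| ^ (p - 2) x` of `|x| ^ p` is
locally Lipschitz with constant of order `|x| ^ (p - 2)`, so the mean value theorem gives
`|x + y| ^ p ≤ |x| ^ p + p |x| ^ (p - 2) x y + C (|x| ^ (p - 2) y ^ 2 + |y| ^ p)`.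
With `x = T n`, `y = ξ n` the linear term has expectation zero by independence and centring, hence
`E|T (n+1)|^p ≤ E|T n|^p + C (E|T n|^(p-2) E ξ² + E|ξ|^p)`. Young's inequality
`E|T n|^(p-2) ≤ ε E|T n|^p + ε^(1 - p/2)` with `ε ≍ 1/n` turns this into a recursion whose solutions
are `O(n ^ (p/2))`, which is the claim after the normalisation by `√n`.
-/

open MeasureTheory Real ProbabilityTheory Set

theorem hasDerivAt_abs_rpow_mul_self (r : ℝ) {u : ℝ} (hu : u ≠ 0) :
    HasDerivAt (fun v : ℝ => |v| ^ r * v) ((r + 1) * |u| ^ r) u := by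
  have hu' : |u| ≠ 0 := abs_ne_zero.2 hu
  refine (((hasDerivAt_abs hu).rpow_const (p := r) (.inl hu')).mul (hasDerivAt_id u)).congr_deriv ?_
  rw [rpow_sub_one hu']
  calc _ = r * (|u| ^ r / |u|) * (SignType.sign u * u) + |u| ^ r := by simp only [id]; ring
    _ = (r + 1) * |u| ^ r := by rw [sign_mul_self]; field_simp

theorem abs_abs_rpow_mul_self_sub_le {r : ℝ} (hr : 0 ≤ r) (a b : ℝ) :
    |(|a| ^ r * a - |b| ^ r * b)| ≤ (r + 1) * (|a| + |b|) ^ r * |a - b| := by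
  have hab_nonneg : 0 ≤ |a| + |b| := by positivity
  -- For `a`, `b` of opposite signs the segment `[a, b]` meets `0`, where
  -- `hasDerivAt_abs_rpow_mul_self` does not apply; but then `|a - b| = |a| + |b|`.
  rcases le_or_gt (a * b) 0 with hab | hab
  · have hsub : |a - b| = |a| + |b| := by
      refine (pow_left_inj₀ (abs_nonneg _) hab_nonneg two_ne_zero).1 ?_
      rw [sq_abs, add_sq, sq_abs, sq_abs, mul_assoc, ← abs_mul, abs_of_nonpos hab]
      ring
    calc |(|a| ^ r * a - |b| ^ r * b)| ≤ |a| ^ r * |a| + |b| ^ r * |b| :=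
          (abs_sub _ _).trans_eq (by simp [abs_mul, abs_of_nonneg (rpow_nonneg (abs_nonneg _) r)])
      _ ≤ (|a| + |b|) ^ r * |a| + (|a| + |b|) ^ r * |b| := by
          gcongr <;> linarith [abs_nonneg a, abs_nonneg b]
      _ = 1 * (|a| + |b|) ^ r * |a - b| := by rw [hsub]; ring
      _ ≤ (r + 1) * (|a| + |b|) ^ r * |a - b| := by gcongr; linarith
  · have hne : ∀ c ∈ uIcc a b, c ≠ 0 := by
      rintro c hc rfl
      rcases mem_uIcc.1 hc with h | h <;> nlinarith
    have hbound : ∀ c ∈ uIcc a b, ‖(r + 1) * |c| ^ r‖ ≤ (r + 1) * (|a| + |b|) ^ r := by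
      intro c hc
      have hc' : |c| ≤ |a| + |b| := by
        rcases mem_uIcc.1 hc with h | h
        · exact (abs_le_max_abs_abs h.1 h.2).trans
            (max_le_add_of_nonneg (abs_nonneg _) (abs_nonneg _))
        · exact (abs_le_max_abs_abs h.1 h.2).trans (by simp [abs_nonneg])
      rw [Real.norm_of_nonneg (by positivity)]
      gcongr
    simpa [Real.norm_eq_abs] using Convex.norm_image_sub_le_of_norm_hasDerivWithin_le
      (fun c hc => (hasDerivAt_abs_rpow_mul_self r (hne c hc)).hasDerivWithinAt)
      hbound (convex_uIcc a b) right_mem_uIcc left_mem_uIcc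

theorem abs_add_rpow_sub_le {p : ℝ} (hp : 2 ≤ p) (x y : ℝ) :
    |x + y| ^ p - |x| ^ p - p * (|x| ^ (p - 2) * x) * y ≤
      p * (p - 1) * (2 * |x| + |y|) ^ (p - 2) * y ^ 2 := by
  set g : ℝ := |x| ^ (p - 2) * x
  have hderiv : ∀ t, HasDerivAt (fun t => |x + t| ^ p - p * g * t)
      (p * (|x + t| ^ (p - 2) * (x + t) - g)) t := fun t =>
    (((hasDerivAt_abs_rpow (x + t) (by linarith)).comp_const_add x t).sub
      ((hasDerivAt_id t).const_mul (p * g))).congr_deriv (by ring)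
  have hbound : ∀ t ∈ uIcc 0 y, ‖p * (|x + t| ^ (p - 2) * (x + t) - g)‖ ≤
      p * (p - 1) * (2 * |x| + |y|) ^ (p - 2) * |y| := by
    intro t ht
    have ht' : |t| ≤ |y| := by simpa using abs_sub_left_of_mem_uIcc ht
    have hxt : |x + t| + |x| ≤ 2 * |x| + |y| := by linarith [abs_add_le x t]
    rw [Real.norm_eq_abs, abs_mul, abs_of_nonneg (by linarith : 0 ≤ p)]
    calc p * |(|x + t| ^ (p - 2) * (x + t) - g)|
        ≤ p * ((p - 2 + 1) * (|x + t| + |x|) ^ (p - 2) * |x + t - x|) :=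
          mul_le_mul_of_nonneg_left (abs_abs_rpow_mul_self_sub_le (by linarith) _ _) (by linarith)
      _ ≤ p * ((p - 2 + 1) * (2 * |x| + |y|) ^ (p - 2) * |y|) := by
          rw [add_sub_cancel_left]
          gcongr
      _ = p * (p - 1) * (2 * |x| + |y|) ^ (p - 2) * |y| := by ring
  have hmvt := Convex.norm_image_sub_le_of_norm_hasDerivWithin_le
    (fun t _ => (hderiv t).hasDerivWithinAt) hbound (convex_uIcc 0 y) left_mem_uIcc right_mem_uIcc
  simp only [add_zero, mul_zero, sub_zero, Real.norm_eq_abs] at hmvt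
  calc _ = |x + y| ^ p - p * g * y - |x| ^ p := by ring
    _ ≤ _ := (le_abs_self _).trans hmvt
    _ = _ := by rw [mul_assoc, abs_mul_abs_self, sq]

theorem abs_rpow_sub_two_mul_sq {p : ℝ} (hp : p ≠ 0) (y : ℝ) : |y| ^ (p - 2) * y ^ 2 = |y| ^ p := by
  rw [← sq_abs, ← rpow_two, ← rpow_add' (abs_nonneg y) (by simpa using hp), sub_add_cancel]

theorem abs_add_rpow_le {p : ℝ} (hp : 2 ≤ p) (x y : ℝ) :
    |x + y| ^ p ≤ |x| ^ p + p * (|x| ^ (p - 2) * x) * y +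
      p * (p - 1) * 3 ^ (p - 2) * (|x| ^ (p - 2) * y ^ 2 + |y| ^ p) := by
  have hy := abs_rpow_sub_two_mul_sq (by linarith : p ≠ 0) y
  have hmax : (2 * |x| + |y|) ^ (p - 2) * y ^ 2 ≤
      3 ^ (p - 2) * (|x| ^ (p - 2) * y ^ 2 + |y| ^ p) := by
    rcases le_total |x| |y| with h | h
    · calc (2 * |x| + |y|) ^ (p - 2) * y ^ 2 ≤ (3 * |y|) ^ (p - 2) * y ^ 2 := by
            gcongr; linarith
        _ = 3 ^ (p - 2) * |y| ^ p := by rw [mul_rpow (by norm_num) (abs_nonneg y), mul_assoc, hy]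
        _ ≤ _ := by gcongr; exact le_add_of_nonneg_left (by positivity)
    · calc (2 * |x| + |y|) ^ (p - 2) * y ^ 2 ≤ (3 * |x|) ^ (p - 2) * y ^ 2 := by
            gcongr; linarith
        _ = 3 ^ (p - 2) * (|x| ^ (p - 2) * y ^ 2) := by
            rw [mul_rpow (by norm_num) (abs_nonneg x), mul_assoc]
        _ ≤ _ := by gcongr; exact le_add_of_nonneg_right (by positivity)
  have hpp : 0 ≤ p * (p - 1) := by nlinarith
  have := mul_le_mul_of_nonneg_left hmax hpp
  linarith [abs_add_rpow_sub_le hp x y]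

theorem abs_rpow_sub_two_le {p ε : ℝ} (hp : 2 ≤ p) (hε : 0 < ε) (t : ℝ) :
    |t| ^ (p - 2) ≤ ε * |t| ^ p + ε ^ (1 - p / 2) := by
  rcases le_total 1 (ε * t ^ 2) with h | h
  · calc |t| ^ (p - 2) ≤ |t| ^ (p - 2) * (ε * t ^ 2) := le_mul_of_one_le_right (by positivity) h
      _ = ε * |t| ^ p := by rw [← abs_rpow_sub_two_mul_sq (by linarith : p ≠ 0)]; ring
      _ ≤ _ := le_add_of_nonneg_right (by positivity)
  · have ht : |t| ^ 2 ≤ ε⁻¹ := by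
      rwa [sq_abs, ← mul_one ε⁻¹, le_inv_mul_iff₀ hε]
    calc |t| ^ (p - 2) = (|t| ^ 2) ^ ((p - 2) / 2) := by
          rw [← rpow_two, ← rpow_mul (abs_nonneg t)]; ring_nf
      _ ≤ (ε⁻¹) ^ ((p - 2) / 2) := by gcongr
      _ = ε ^ (1 - p / 2) := by rw [inv_rpow hε.le, ← rpow_neg hε.le]; ring_nf
      _ ≤ _ := le_add_of_nonneg_left (by positivity)

theorem rpow_add_add_one_rpow_sub_one_le {x r : ℝ} (hx : 0 ≤ x) (hr : 1 ≤ r) :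
    x ^ r + (x + 1) ^ (r - 1) ≤ (x + 1) ^ r := by
  have hr' : r - 1 + 1 ≠ 0 := by linarith
  have key : x ^ (r - 1) * x ≤ (x + 1) ^ (r - 1) * x := by gcongr; linarith
  calc x ^ r + (x + 1) ^ (r - 1) = x ^ (r - 1 + 1) + (x + 1) ^ (r - 1) := by rw [sub_add_cancel]
    _ ≤ (x + 1) ^ (r - 1) * x + (x + 1) ^ (r - 1) := by rw [rpow_add_one' hx hr']; linarith
    _ = (x + 1) ^ (r - 1 + 1) := by rw [rpow_add_one' (by linarith) hr']; ring
    _ = (x + 1) ^ r := by rw [sub_add_cancel]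

theorem exists_le_mul_rpow_of_le_add {A : ℕ → ℝ} {a b r : ℝ} (hr : 1 ≤ r) (ha : 0 ≤ a)
    (hb : 0 ≤ b) (h0 : A 0 ≤ 0)
    (hstep : ∀ n (ε : ℝ), 0 < ε → A (n + 1) ≤ A n + a * (ε * A n + ε ^ (1 - r)) + b) :
    ∃ K, 0 ≤ K ∧ ∀ n : ℕ, A n ≤ K * (n : ℝ) ^ r := by
  -- At step `n` take `ε = δ / (n + 1)`: both terms of the increment are then
  -- `O((n + 1) ^ (r - 1))`, and `a δ ≤ 1 / 2` lets the induction absorb the one proportional to `K`.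
  set δ : ℝ := (2 * a + 1)⁻¹
  have hδ : 0 < δ := by positivity
  have haδ : a * δ ≤ 1 / 2 := by
    rw [← div_eq_mul_inv, div_le_iff₀ (by positivity)]; linarith
  set K := 2 * (a * δ ^ (1 - r) + b)
  have hK : 0 ≤ K := by positivity
  refine ⟨K, hK, fun n => ?_⟩
  induction n with
  | zero => simpa [zero_rpow (by linarith : r ≠ 0)] using h0
  | succ n ih =>
    set m : ℝ := n + 1
    have hm : 1 ≤ m := by simp [m]
    have hmr : 1 ≤ m ^ (r - 1) := one_le_rpow hm (by linarith)
    have hεA : δ / m * A n ≤ δ * K * m ^ (r - 1) := by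
      calc δ / m * A n ≤ δ / m * (K * m ^ r) := by
            gcongr
            exact ih.trans (by gcongr; simp [m])
        _ = δ * K * m ^ (r - 1) := by rw [rpow_sub_one (by positivity)]; ring
    have hεr : (δ / m) ^ (1 - r) = δ ^ (1 - r) * m ^ (r - 1) := by
      rw [div_rpow hδ.le (by positivity), div_eq_mul_inv, ← rpow_neg (by positivity), neg_sub]
    calc A (n + 1) ≤ A n + a * (δ / m * A n + (δ / m) ^ (1 - r)) + b := hstep n _ (by positivity)
      _ ≤ K * n ^ r + (a * δ * K + a * δ ^ (1 - r) + b) * m ^ (r - 1) := by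
          rw [hεr]
          nlinarith [mul_le_mul_of_nonneg_left hεA ha]
      _ ≤ K * n ^ r + K * m ^ (r - 1) := by
          gcongr
          nlinarith
      _ ≤ K * m ^ r := by
          rw [← mul_add]
          exact mul_le_mul_of_nonneg_left (rpow_add_add_one_rpow_sub_one_le (by positivity) hr) hK
      _ = K * ((n + 1 : ℕ) : ℝ) ^ r := by push_cast; rfl

section Moments

variable {Ω : Type*} [MeasurableSpace Ω] {μ : Measure Ω} {p : ℝ} {X Y : Ω → ℝ}

theorem MeasureTheory.MemLp.integrable_abs_rpow [IsFiniteMeasure μ]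
    (hX : MemLp X (ENNReal.ofReal p) μ) {q : ℝ} (hq : 0 ≤ q) (hqp : q ≤ p) :
    Integrable (fun ω => |X ω| ^ q) μ := by
  simpa [ENNReal.toReal_ofReal hq] using
    (hX.mono_exponent (ENNReal.ofReal_le_ofReal hqp)).integrable_norm_rpow'

theorem memLp_ofReal_of_lintegral_abs_rpow_lt_top (hX : AEStronglyMeasurable X μ) (hp : 0 < p)
    (h : ∫⁻ ω, ENNReal.ofReal (|X ω| ^ p) ∂μ < ⊤) : MemLp X (ENNReal.ofReal p) μ := by
  refine (integrable_norm_rpow_iff hX (by simpa using hp) ENNReal.ofReal_ne_top).1 ⟨?_, ?_⟩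
  · exact (hX.norm.aemeasurable.pow_const _).aestronglyMeasurable
  · rw [hasFiniteIntegral_iff_ofReal (ae_of_all _ fun ω => by positivity)]
    simpa [ENNReal.toReal_ofReal hp.le] using h

theorem lintegral_ofReal_abs_inv_sqrt_mul_rpow_le {K : ℝ} (n : ℕ) (hp : 0 ≤ p) (hK : 0 ≤ K)
    (hX : Integrable (fun ω => |X ω| ^ p) μ) (hXK : ∫ ω, |X ω| ^ p ∂μ ≤ K * (n : ℝ) ^ (p / 2)) :
    ∫⁻ ω, ENNReal.ofReal (|(√(n : ℝ))⁻¹ * X ω| ^ p) ∂μ ≤ ENNReal.ofReal K := by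
  set c := (√(n : ℝ))⁻¹ ^ p
  have hc : c * (n : ℝ) ^ (p / 2) ≤ 1 := by
    rw [show (n : ℝ) ^ (p / 2) = √(n : ℝ) ^ p by
      rw [sqrt_eq_rpow, ← rpow_mul (Nat.cast_nonneg n)]; ring_nf,
      ← mul_rpow (by positivity) (by positivity)]
    exact rpow_le_one (by positivity) (inv_mul_le_one_of_le₀ le_rfl (by positivity)) hp
  calc ∫⁻ ω, ENNReal.ofReal (|(√(n : ℝ))⁻¹ * X ω| ^ p) ∂μ
      = ∫⁻ ω, ENNReal.ofReal (c * |X ω| ^ p) ∂μ := by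
        simp_rw [abs_mul, mul_rpow (abs_nonneg _) (abs_nonneg _),
          abs_of_nonneg (by positivity : 0 ≤ (√(n : ℝ))⁻¹)]
        rfl
    _ = ENNReal.ofReal (∫ ω, c * |X ω| ^ p ∂μ) :=
        (ofReal_integral_eq_lintegral_ofReal (hX.const_mul c)
          (ae_of_all _ fun ω => by positivity)).symm
    _ ≤ ENNReal.ofReal K := by
        refine ENNReal.ofReal_le_ofReal ?_
        calc ∫ ω, c * |X ω| ^ p ∂μ ≤ c * (K * (n : ℝ) ^ (p / 2)) := by
              rw [integral_const_mul]; gcongr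
          _ = K * (c * (n : ℝ) ^ (p / 2)) := by ring
          _ ≤ K := mul_le_of_le_one_right hK hc

variable [IsProbabilityMeasure μ]

theorem integral_abs_rpow_sub_two_le (hp : 2 ≤ p) (hX : MemLp X (ENNReal.ofReal p) μ) {ε : ℝ}
    (hε : 0 < ε) : ∫ ω, |X ω| ^ (p - 2) ∂μ ≤ ε * ∫ ω, |X ω| ^ p ∂μ + ε ^ (1 - p / 2) := by
  have hXp := (hX.integrable_abs_rpow (by linarith) le_rfl).const_mul ε
  calc ∫ ω, |X ω| ^ (p - 2) ∂μ ≤ ∫ ω, (ε * |X ω| ^ p + ε ^ (1 - p / 2)) ∂μ :=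
        integral_mono (hX.integrable_abs_rpow (by linarith) (by linarith))
          (hXp.add (integrable_const _)) fun ω => abs_rpow_sub_two_le hp hε (X ω)
    _ = ε * ∫ ω, |X ω| ^ p ∂μ + ε ^ (1 - p / 2) := by
        rw [integral_add hXp (integrable_const _), integral_const_mul]; simp

theorem ProbabilityTheory.IndepFun.integral_abs_add_rpow_le (hp : 2 ≤ p) (hXY : IndepFun X Y μ)
    (hX : MemLp X (ENNReal.ofReal p) μ) (hY : MemLp Y (ENNReal.ofReal p) μ)
    (hY0 : ∫ ω, Y ω ∂μ = 0) :
    ∫ ω, |X ω + Y ω| ^ p ∂μ ≤ ∫ ω, |X ω| ^ p ∂μ + p * (p - 1) * 3 ^ (p - 2) *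
      ((∫ ω, |X ω| ^ (p - 2) ∂μ) * (∫ ω, Y ω ^ 2 ∂μ) + ∫ ω, |Y ω| ^ p ∂μ) := by
  set C := p * (p - 1) * 3 ^ (p - 2)
  have hφ : Measurable fun x : ℝ => |x| ^ (p - 2) * x := by fun_prop
  have hψ : Measurable fun x : ℝ => |x| ^ (p - 2) := by fun_prop
  have hXp := hX.integrable_abs_rpow (by linarith) le_rfl
  have hXp2 := hX.integrable_abs_rpow (by linarith) (by linarith : p - 2 ≤ p)
  have hYp := hY.integrable_abs_rpow (by linarith) le_rfl
  have hY1 : Integrable Y μ := hY.integrable (by simpa using (by linarith : 1 ≤ p))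
  have hY2 : Integrable (fun ω => Y ω ^ 2) μ :=
    (hY.mono_exponent (by simpa using (by linarith : 2 ≤ p))).integrable_sq
  have hφX : Integrable (fun ω => |X ω| ^ (p - 2) * X ω) μ := by
    refine (hX.integrable_abs_rpow (by linarith) (by linarith : p - 1 ≤ p)).mono'
      (hφ.comp_aemeasurable hX.aemeasurable).aestronglyMeasurable (ae_of_all _ fun ω => ?_)
    rw [norm_mul, norm_rpow_of_nonneg (abs_nonneg _), norm_abs_eq_norm, Real.norm_eq_abs,
      ← rpow_add_one' (abs_nonneg _) (by linarith), sub_add]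
    norm_num
  have hind₁ := hXY.comp hφ measurable_id
  have hind₂ := hXY.comp hψ (measurable_id.pow_const 2)
  have hint₁ : Integrable (fun ω => |X ω| ^ (p - 2) * X ω * Y ω) μ :=
    hind₁.integrable_mul hφX hY1
  have hint₂ : Integrable (fun ω => |X ω| ^ (p - 2) * Y ω ^ 2) μ :=
    hind₂.integrable_mul hXp2 hY2
  have hE₁ : ∫ ω, |X ω| ^ (p - 2) * X ω * Y ω ∂μ = 0 := by
    simpa [hY0] using hind₁.integral_fun_mul_eq_mul_integral hφX.1 hY1.1
  have hE₂ : ∫ ω, |X ω| ^ (p - 2) * Y ω ^ 2 ∂μ =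
      (∫ ω, |X ω| ^ (p - 2) ∂μ) * ∫ ω, Y ω ^ 2 ∂μ :=
    hind₂.integral_fun_mul_eq_mul_integral hXp2.1 hY2.1
  have hA : Integrable (fun ω => |X ω| ^ p + p * (|X ω| ^ (p - 2) * X ω * Y ω)) μ :=
    hXp.add (hint₁.const_mul p)
  have hB : Integrable (fun ω => |X ω| ^ (p - 2) * Y ω ^ 2 + |Y ω| ^ p) μ := hint₂.add hYp
  calc ∫ ω, |X ω + Y ω| ^ p ∂μ ≤ ∫ ω, (|X ω| ^ p + p * (|X ω| ^ (p - 2) * X ω * Y ω) +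
        C * (|X ω| ^ (p - 2) * Y ω ^ 2 + |Y ω| ^ p)) ∂μ := by
        refine integral_mono ((hX.add hY).integrable_abs_rpow (by linarith) le_rfl)
          (hA.add (hB.const_mul C)) fun ω => ?_
        linarith [abs_add_rpow_le hp (X ω) (Y ω)]
    _ = _ := by
        rw [integral_add hA (hB.const_mul C), integral_add hXp (hint₁.const_mul p),
          integral_const_mul, integral_const_mul, integral_add hint₂ hYp, hE₁, hE₂]
        ring

end Moments

section PartialSums

variable {Ω : Type*} [MeasurableSpace Ω] {μ : Measure Ω} {ξ : ℕ → Ω → ℝ} {p : ℝ}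

theorem memLp_sum_range_of_identDistrib {q : ENNReal} (hident : ∀ i, IdentDistrib (ξ i) (ξ 0) μ μ)
    (hmem : MemLp (ξ 0) q μ) (n : ℕ) : MemLp (fun ω => ∑ i ∈ Finset.range n, ξ i ω) q μ :=
  memLp_finsetSum _ fun i _ => (hident i).memLp_iff.2 hmem

variable [IsProbabilityMeasure μ]

theorem integral_abs_sum_range_succ_rpow_le (hp : 2 ≤ p) (hmeas : ∀ i, Measurable (ξ i))
    (hindep : iIndepFun ξ μ) (hident : ∀ i, IdentDistrib (ξ i) (ξ 0) μ μ)
    (hcent : ∫ ω, ξ 0 ω ∂μ = 0) (hmem : MemLp (ξ 0) (ENNReal.ofReal p) μ) (n : ℕ) {ε : ℝ}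
    (hε : 0 < ε) :
    ∫ ω, |∑ i ∈ Finset.range (n + 1), ξ i ω| ^ p ∂μ ≤ ∫ ω, |∑ i ∈ Finset.range n, ξ i ω| ^ p ∂μ +
      p * (p - 1) * 3 ^ (p - 2) * (∫ ω, ξ 0 ω ^ 2 ∂μ) *
        (ε * ∫ ω, |∑ i ∈ Finset.range n, ξ i ω| ^ p ∂μ + ε ^ (1 - p / 2)) +
      p * (p - 1) * 3 ^ (p - 2) * ∫ ω, |ξ 0 ω| ^ p ∂μ := by
  set S := fun ω => ∑ i ∈ Finset.range n, ξ i ω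
  have hS := memLp_sum_range_of_identDistrib hident hmem n
  have hind : IndepFun S (ξ n) μ := by
    simpa only [Finset.sum_fn] using
      hindep.indepFun_finsetSum_of_notMem hmeas Finset.notMem_range_self
  have hC : 0 ≤ p * (p - 1) * 3 ^ (p - 2) :=
    mul_nonneg (mul_nonneg (by linarith) (by linarith)) (by positivity)
  have hyoung := mul_le_mul_of_nonneg_left (integral_abs_rpow_sub_two_le hp hS hε)
    (mul_nonneg hC (integral_nonneg (μ := μ) fun ω => sq_nonneg (ξ 0 ω)))
  calc ∫ ω, |∑ i ∈ Finset.range (n + 1), ξ i ω| ^ p ∂μ = ∫ ω, |S ω + ξ n ω| ^ p ∂μ := by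
        simp only [S, Finset.sum_range_succ]
    _ ≤ ∫ ω, |S ω| ^ p ∂μ + p * (p - 1) * 3 ^ (p - 2) *
          ((∫ ω, |S ω| ^ (p - 2) ∂μ) * (∫ ω, ξ 0 ω ^ 2 ∂μ) + ∫ ω, |ξ 0 ω| ^ p ∂μ) := by
        have hm₂ : ∫ ω, ξ n ω ^ 2 ∂μ = ∫ ω, ξ 0 ω ^ 2 ∂μ :=
          ((hident n).comp (measurable_id.pow_const 2)).integral_eq
        have hmₚ : ∫ ω, |ξ n ω| ^ p ∂μ = ∫ ω, |ξ 0 ω| ^ p ∂μ :=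
          ((hident n).comp (measurable_id.abs.pow_const p)).integral_eq
        rw [← hm₂, ← hmₚ]
        exact hind.integral_abs_add_rpow_le hp hS ((hident n).memLp_iff.2 hmem)
          ((hident n).integral_eq.trans hcent)
    _ ≤ _ := by linear_combination hyoung

theorem exists_integral_abs_sum_range_rpow_le (hp : 2 ≤ p) (hmeas : ∀ i, Measurable (ξ i))
    (hindep : iIndepFun ξ μ) (hident : ∀ i, IdentDistrib (ξ i) (ξ 0) μ μ)
    (hcent : ∫ ω, ξ 0 ω ∂μ = 0) (hmem : MemLp (ξ 0) (ENNReal.ofReal p) μ) :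
    ∃ K, 0 ≤ K ∧ ∀ n : ℕ, ∫ ω, |∑ i ∈ Finset.range n, ξ i ω| ^ p ∂μ ≤ K * (n : ℝ) ^ (p / 2) := by
  have hC : 0 ≤ p * (p - 1) * 3 ^ (p - 2) :=
    mul_nonneg (mul_nonneg (by linarith) (by linarith)) (by positivity)
  exact exists_le_mul_rpow_of_le_add (by linarith)
    (mul_nonneg hC (integral_nonneg fun ω => sq_nonneg _))
    (mul_nonneg hC (integral_nonneg fun ω => by positivity))
    (by simp [zero_rpow (by linarith : p ≠ 0)])
    fun n _ hε => integral_abs_sum_range_succ_rpow_le hp hmeas hindep hident hcent hmem n hε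

end PartialSums

theorem stmt_12_general {Ω : Type*} [MeasurableSpace Ω] (μ : Measure Ω) [IsProbabilityMeasure μ]
    (ξ : ℕ → Ω → ℝ) (hmeas : ∀ i, Measurable (ξ i))
    (hindep : iIndepFun ξ μ)
    (hident : ∀ i, IdentDistrib (ξ i) (ξ 0) μ μ)
    (hcent : ∫ ω, ξ 0 ω ∂μ = 0)
    (p : ℝ) (hp : 2 ≤ p)
    (hmom : ∫⁻ ω, ENNReal.ofReal (|ξ 0 ω| ^ p) ∂μ < ⊤) :
    ⨆ n : ℕ, ∫⁻ ω,
        ENNReal.ofReal (|(Real.sqrt n)⁻¹ * ∑ i ∈ Finset.range n, ξ i ω| ^ p) ∂μ < ⊤ := by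
  have hmem : MemLp (ξ 0) (ENNReal.ofReal p) μ :=
    memLp_ofReal_of_lintegral_abs_rpow_lt_top (hmeas 0).aestronglyMeasurable (by linarith) hmom
  obtain ⟨K, hK0, hK⟩ := exists_integral_abs_sum_range_rpow_le hp hmeas hindep hident hcent hmem
  refine (iSup_le fun n => ?_).trans_lt (ENNReal.ofReal_lt_top (r := K))
  exact lintegral_ofReal_abs_inv_sqrt_mul_rpow_le n (by linarith) hK0
    ((memLp_sum_range_of_identDistrib hident hmem n).integrable_abs_rpow (by linarith) le_rfl)
    (hK n)

theorem stmt_12 {Ω : Type*} [MeasurableSpace Ω] (μ : Measure Ω) [IsProbabilityMeasure μ]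
    (ξ : ℕ → Ω → ℝ) (hmeas : ∀ i, Measurable (ξ i))
    (hindep : iIndepFun ξ μ)
    (hident : ∀ i, IdentDistrib (ξ i) (ξ 0) μ μ)
    (hint : Integrable (ξ 0) μ) (hcent : ∫ ω, ξ 0 ω ∂μ = 0)
    (hvar : ∫⁻ ω, ENNReal.ofReal ((ξ 0 ω) ^ 2) ∂μ < ⊤)
    (p : ℝ) (hp : 2 ≤ p)
    (hmom : ∫⁻ ω, ENNReal.ofReal (|ξ 0 ω| ^ p) ∂μ < ⊤) :
    ⨆ n : ℕ, ∫⁻ ω,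
        ENNReal.ofReal (|(Real.sqrt n)⁻¹ * ∑ i ∈ Finset.range n, ξ i ω| ^ p) ∂μ < ⊤ :=
  stmt_12_general μ ξ hmeas hindep hident hcent p hp hmom
end

section
/- Let β > 2 and suppose P(|ξ| > u) ≤ u^{-β} (ln u)^{-1} for all u ≥ e, where ξ is centered with i.i.d. copies ξ_i and S_n = n^{-1/2} Σ ξ_i. Then there exists C = C(β) with sup_n P(|S_n| > u) ≤ C · u^{-β} · ln ln u for all u ≥ e^e. -/
/-!
Truncate every summand at level `y = u √n / (16 β)`. Some `|ξ_i|` exceeds `y` with probability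
at most `n y^(-β) ≤ (16 β)^β u^(-β)`, since `β ≥ 2`. Off that event `∑ ξ_i` is the sum of the
centred truncated variables plus `n` times the truncation bias, which centring bounds by
`E ξ² / y`, small against `u √n` once `u` is large. The centred truncated variables are bounded
by `2 y` and have variance at most `E ξ²`, so the Chernoff bound at `t = log u / (4 y)`, where
`e^(2 t y) = √u`, leaves a probability of at most `2 u^(-β)`. Hence `P(|S_n| > u) ≤ C u^(-β)`
uniformly in `n`, and `ln ln u ≥ 1` for `u ≥ e^e`.
-/

open MeasureTheory Real ProbabilityTheory

open Set Finset

theorem Real.exp_le_one_add_add_sq_mul_exp {s L : ℝ} (hsL : s ≤ L) (hL : 0 ≤ L) :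
    exp s ≤ 1 + s + s ^ 2 * exp L := by
  rcases le_or_gt (-1) s with hs | hs
  · have h1 : exp s * (1 - s) ≤ 1 := by
      calc exp s * (1 - s) ≤ exp s * exp (-s) := by gcongr; linarith [add_one_le_exp (-s)]
        _ = 1 := by rw [← exp_add, add_neg_cancel, exp_zero]
    have h2 : s ^ 2 * exp s ≤ s ^ 2 * exp L := by gcongr
    nlinarith [exp_pos s]
  · have h1 : exp s ≤ 1 := exp_le_one_iff.2 (by linarith)
    nlinarith [one_le_exp hL]

noncomputable def truncAt (y x : ℝ) : ℝ := if |x| ≤ y then x else 0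

theorem measurable_truncAt (y : ℝ) : Measurable (truncAt y) :=
  Measurable.ite (measurableSet_le measurable_abs measurable_const) measurable_id measurable_const

theorem truncAt_of_abs_le {y x : ℝ} (h : |x| ≤ y) : truncAt y x = x := if_pos h

theorem abs_truncAt_le {y : ℝ} (hy : 0 ≤ y) (x : ℝ) : |truncAt y x| ≤ y := by
  unfold truncAt
  split_ifs with h
  · exact h
  · simpa using hy

theorem sq_truncAt_le (y x : ℝ) : truncAt y x ^ 2 ≤ x ^ 2 := by
  unfold truncAt
  split_ifs
  · exact le_rfl
  · simpa using sq_nonneg x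

theorem abs_truncAt_sub_self_le {y : ℝ} (hy : 0 < y) (x : ℝ) : |truncAt y x - x| ≤ x ^ 2 / y := by
  unfold truncAt
  split_ifs with h
  · simpa using by positivity
  · rw [zero_sub, abs_neg, le_div_iff₀ hy, ← sq_abs, sq]
    exact mul_le_mul_of_nonneg_left (not_le.1 h).le (abs_nonneg x)

theorem le_abs_sum_truncAt_sub {n : ℕ} {a : ℕ → ℝ} {x y m : ℝ} (ha : ∀ i ∈ range n, |a i| ≤ y)
    (hm : n * |m| ≤ x / 2) (hx : x < |∑ i ∈ range n, a i|) :
    x / 2 ≤ |∑ i ∈ range n, (truncAt y (a i) - m)| := by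
  rw [sum_sub_distrib, sum_congr rfl fun i hi => truncAt_of_abs_le (ha i hi), sum_const,
    card_range, nsmul_eq_mul]
  have := abs_sub_abs_le_abs_sub (∑ i ∈ range n, a i) (n * m)
  rw [abs_mul, Nat.abs_cast] at this
  linarith

theorem setOf_lt_abs_sum_subset {Ω : Type*} {ξ : ℕ → Ω → ℝ} {n : ℕ} {x y m : ℝ}
    (hm : n * |m| ≤ x / 2) :
    {ω | x < |∑ i ∈ range n, ξ i ω|} ⊆ (⋃ i ∈ range n, {ω | y < |ξ i ω|}) ∪
      {ω | x / 2 ≤ |∑ i ∈ range n, (truncAt y (ξ i ω) - m)|} := by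
  intro ω (hω : x < _)
  by_cases hbig : ω ∈ ⋃ i ∈ range n, {ω | y < |ξ i ω|}
  · exact Or.inl hbig
  exact Or.inr (le_abs_sum_truncAt_sub (fun i hi => not_lt.1 fun h => hbig (mem_biUnion hi h))
    hm hω)

theorem natCast_mul_rpow_neg_le {β κ u : ℝ} (hβ : 2 ≤ β) (hκ : 0 < κ) (hu : 0 < u) {n : ℕ}
    (hn : 0 < n) : n * (u * √n / κ) ^ (-β) ≤ κ ^ β * u ^ (-β) := by
  have hns : (n : ℝ) = √n ^ (2 : ℝ) := by rw [rpow_two, sq_sqrt n.cast_nonneg]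
  have hs : 1 ≤ √(n : ℝ) := one_le_sqrt.2 (by exact_mod_cast hn)
  set s := √(n : ℝ)
  have hs0 : 0 < s := by positivity
  calc (n : ℝ) * (u * s / κ) ^ (-β) = κ ^ β * u ^ (-β) * (s ^ (2 : ℝ) * s ^ (-β)) := by
        rw [div_eq_mul_inv, mul_rpow (by positivity) (by positivity), mul_rpow hu.le hs0.le,
          inv_rpow hκ.le, rpow_neg hκ.le, inv_inv, hns]
        ring
    _ ≤ κ ^ β * u ^ (-β) * 1 := by
        gcongr
        rw [← rpow_add hs0]
        exact rpow_le_one_of_one_le_of_nonpos hs (by linarith)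
    _ = κ ^ β * u ^ (-β) := mul_one _

theorem chernoff_exponent_le {β σ2 u y n t : ℝ} (hβ : 0 < β) (hσ2 : 0 ≤ σ2) (hu : 1 ≤ u)
    (huσ : 32 * β * σ2 ≤ u) (hn : (16 * β * y) ^ 2 = u ^ 2 * n) (ht : t * y = log u / 4) :
    n * (t ^ 2 * σ2 * exp (t * (2 * y))) - t * (16 * β * y / 2) ≤ -(β * log u) := by
  set L := log u
  have hu0 : 0 < u := by linarith
  have hL : 0 ≤ L := log_nonneg hu
  have hexp : exp (t * (2 * y)) = √u := by
    rw [sqrt_eq_rpow, rpow_def_of_pos hu0, show t * (2 * y) = L * (1 / 2) by linarith]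
  have hsq : √u * √u = u := mul_self_sqrt hu0.le
  have hlog : L ≤ 2 * √u := by
    have := log_le_sub_one_of_pos (sqrt_pos.2 hu0)
    rw [log_sqrt hu0.le] at this
    linarith
  have hnt : n * t ^ 2 * u ^ 2 = 16 * β ^ 2 * L ^ 2 := by
    linear_combination (t ^ 2) * hn.symm + (256 * β ^ 2 * (t * y + L / 4)) * ht
  have hquad : n * t ^ 2 * σ2 * √u * u ^ 2 ≤ β * L * u ^ 2 :=
    calc n * t ^ 2 * σ2 * √u * u ^ 2 = 16 * β ^ 2 * σ2 * L * (L * √u) := by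
          linear_combination (σ2 * √u) * hnt
      _ ≤ 16 * β ^ 2 * σ2 * L * (2 * u) := by
          gcongr 16 * β ^ 2 * σ2 * L * ?_
          nlinarith [sqrt_nonneg u]
      _ = β * L * (32 * β * σ2) * u := by ring
      _ ≤ β * L * u * u := by gcongr
      _ = β * L * u ^ 2 := by ring
  have hlin : n * t ^ 2 * σ2 * √u ≤ β * L := le_of_mul_le_mul_right hquad (by positivity)
  have hlead : t * (16 * β * y / 2) = 2 * β * L := by linear_combination 8 * β * ht
  rw [hexp, hlead]
  linarith

section

variable {Ω : Type*} [MeasurableSpace Ω] {μ : Measure Ω}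

theorem measureReal_biUnion_abs_gt_le {X : ℕ → Ω → ℝ}
    (hident : ∀ i, IdentDistrib (X i) (X 0) μ μ) (n : ℕ) (y : ℝ) :
    μ.real (⋃ i ∈ range n, {ω | y < |X i ω|}) ≤ n * μ.real {ω | y < |X 0 ω|} := by
  have hs : MeasurableSet {r : ℝ | y < |r|} := measurableSet_lt measurable_const measurable_abs
  calc μ.real (⋃ i ∈ range n, {ω | y < |X i ω|})
      ≤ ∑ i ∈ range n, μ.real {ω | y < |X i ω|} := measureReal_biUnion_finset_le _ _
    _ = n * μ.real {ω | y < |X 0 ω|} := by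
      have hi (i : ℕ) : μ.real {ω | y < |X i ω|} = μ.real {ω | y < |X 0 ω|} :=
        congrArg ENNReal.toReal ((hident i).measure_mem_eq hs)
      rw [sum_congr rfl fun i _ => hi i, sum_const, card_range, nsmul_eq_mul]

theorem integrable_truncAt_comp [IsFiniteMeasure μ] {X : Ω → ℝ} (hX : Measurable X) {y : ℝ}
    (hy : 0 ≤ y) :
    Integrable (fun ω => truncAt y (X ω)) μ :=
  Integrable.of_bound ((measurable_truncAt y).comp hX).aestronglyMeasurable y
    (ae_of_all _ fun ω => abs_truncAt_le hy (X ω))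

theorem abs_integral_truncAt_le [IsFiniteMeasure μ] {X : Ω → ℝ} (hX : Measurable X)
    (hint : Integrable X μ) (hcent : μ[X] = 0) (hsq : Integrable (X ^ 2) μ) {y : ℝ} (hy : 0 < y) :
    |μ[fun ω => truncAt y (X ω)]| ≤ μ[X ^ 2] / y := by
  have hT := integrable_truncAt_comp (μ := μ) hX hy.le
  calc |μ[fun ω => truncAt y (X ω)]| = |∫ ω, (truncAt y (X ω) - X ω) ∂μ| := by
        rw [integral_sub hT hint, hcent, sub_zero]
    _ ≤ ∫ ω, |truncAt y (X ω) - X ω| ∂μ := abs_integral_le_integral_abs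
    _ ≤ ∫ ω, (X ^ 2) ω / y ∂μ :=
        integral_mono (hT.sub hint).abs (hsq.div_const y) fun ω => abs_truncAt_sub_self_le hy _
    _ = μ[X ^ 2] / y := integral_div y _

theorem natCast_mul_abs_integral_truncAt_le [IsFiniteMeasure μ] {X : Ω → ℝ} (hX : Measurable X)
    (hint : Integrable X μ) (hcent : μ[X] = 0) (hsq : Integrable (X ^ 2) μ) {β u y : ℝ}
    {n : ℕ} (hβ : 0 < β) (hu : 1 ≤ u) (huσ : 32 * β * μ[X ^ 2] ≤ u) (hy : 0 < y)
    (hn : (16 * β * y) ^ 2 = u ^ 2 * n) :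
    n * |μ[fun ω => truncAt y (X ω)]| ≤ 16 * β * y / 2 := by
  have hn0 : (0 : ℝ) ≤ n := n.cast_nonneg
  calc n * |μ[fun ω => truncAt y (X ω)]| ≤ n * (μ[X ^ 2] / y) := by
        gcongr
        exact abs_integral_truncAt_le hX hint hcent hsq hy
    _ ≤ 16 * β * y / 2 := by
      rw [mul_div_assoc', div_le_div_iff₀ hy two_pos]
      nlinarith [mul_le_mul_of_nonneg_right (huσ.trans (le_self_pow₀ hu two_ne_zero)) hn0]

variable [IsProbabilityMeasure μ]

theorem mgf_le_exp_of_abs_le_of_integral_eq_zero {W : Ω → ℝ} {b v t : ℝ}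
    (hW : AEMeasurable W μ) (hb : ∀ᵐ ω ∂μ, |W ω| ≤ b) (hmean : μ[W] = 0)
    (hvar : μ[W ^ 2] ≤ v) (ht : 0 ≤ t) :
    mgf W μ t ≤ exp (t ^ 2 * v * exp (t * b)) := by
  obtain ⟨ω₀, hω₀⟩ := hb.exists
  have hb0 : 0 ≤ b := (abs_nonneg _).trans hω₀
  have hWint : Integrable W μ :=
    Integrable.of_bound hW.aestronglyMeasurable b (by simpa only [norm_eq_abs] using hb)
  have hsqint : Integrable (W ^ 2) μ := by
    refine Integrable.of_bound (hW.pow_const 2).aestronglyMeasurable (b ^ 2) ?_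
    filter_upwards [hb] with ω hω
    simpa only [Pi.pow_apply, norm_pow, norm_eq_abs] using pow_le_pow_left₀ (abs_nonneg _) hω 2
  set c := t ^ 2 * exp (t * b)
  have hpoint : ∀ᵐ ω ∂μ, exp (t * W ω) ≤ 1 + t * W ω + c * (W ^ 2) ω := by
    filter_upwards [hb] with ω hω
    have := exp_le_one_add_add_sq_mul_exp (mul_le_mul_of_nonneg_left (abs_le.1 hω).2 ht)
      (mul_nonneg ht hb0)
    simp only [Pi.pow_apply, c]
    linarith
  calc mgf W μ t = ∫ ω, exp (t * W ω) ∂μ := rfl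
    _ ≤ ∫ ω, (1 + t * W ω + c * (W ^ 2) ω) ∂μ :=
      integral_mono_of_nonneg (ae_of_all _ fun _ => (exp_pos _).le)
        (((integrable_const 1).add (hWint.const_mul t)).add (hsqint.const_mul c)) hpoint
    _ = 1 + c * μ[W ^ 2] := by
      have h1 : Integrable (fun ω => 1 + t * W ω) μ := (integrable_const 1).add (hWint.const_mul t)
      rw [integral_add h1 (hsqint.const_mul c), integral_add (integrable_const 1)
        (hWint.const_mul t), integral_const_mul, integral_const_mul, hmean]
      simp
    _ ≤ 1 + c * v := by gcongr
    _ ≤ exp (c * v) := by linarith [add_one_le_exp (c * v)]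
    _ = exp (t ^ 2 * v * exp (t * b)) := by rw [mul_right_comm]

theorem measureReal_sum_ge_le_of_iIndepFun {X : ℕ → Ω → ℝ} (hindep : iIndepFun X μ)
    (hmeas : ∀ i, Measurable (X i)) (hident : ∀ i, IdentDistrib (X i) (X 0) μ μ) {b v t : ℝ}
    (hb : ∀ i ω, |X i ω| ≤ b) (hmean : μ[X 0] = 0) (hvar : μ[X 0 ^ 2] ≤ v) (ht : 0 ≤ t)
    (n : ℕ) (ε : ℝ) :
    μ.real {ω | ε ≤ ∑ i ∈ range n, X i ω} ≤ exp (n * (t ^ 2 * v * exp (t * b)) - t * ε) := by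
  have hexp : ∀ i ∈ range n, Integrable (fun ω => exp (t * X i ω)) μ := fun i _ =>
    Integrable.of_bound ((hmeas i).const_mul t).exp.aestronglyMeasurable (exp (t * b))
      (ae_of_all _ fun ω => by
        rw [norm_of_nonneg (exp_pos _).le]
        exact exp_le_exp.2 (mul_le_mul_of_nonneg_left (abs_le.1 (hb i ω)).2 ht))
  have hmgf : mgf (∑ i ∈ range n, X i) μ t = mgf (X 0) μ t ^ n := by
    rw [hindep.mgf_sum hmeas, prod_congr rfl fun i _ => mgf_congr_of_identDistrib _ _ (hident i) t,
      prod_const, card_range]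
  have hmgf0 := mgf_le_exp_of_abs_le_of_integral_eq_zero (hmeas 0).aemeasurable
    (ae_of_all _ (hb 0)) hmean hvar ht
  calc μ.real {ω | ε ≤ ∑ i ∈ range n, X i ω}
      = μ.real {ω | ε ≤ (∑ i ∈ range n, X i) ω} := by simp only [Finset.sum_apply]
    _ ≤ exp (-t * ε) * mgf (∑ i ∈ range n, X i) μ t :=
      measure_ge_le_exp_mul_mgf ε ht (hindep.integrable_exp_mul_sum hmeas hexp)
    _ ≤ exp (-t * ε) * exp (t ^ 2 * v * exp (t * b)) ^ n := by
      rw [hmgf]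
      exact mul_le_mul_of_nonneg_left (pow_le_pow_left₀ mgf_nonneg hmgf0 n) (exp_pos _).le
    _ = exp (n * (t ^ 2 * v * exp (t * b)) - t * ε) := by
      rw [← exp_nat_mul, ← exp_add]; ring_nf

theorem measureReal_abs_sum_ge_le_of_iIndepFun {X : ℕ → Ω → ℝ} (hindep : iIndepFun X μ)
    (hmeas : ∀ i, Measurable (X i)) (hident : ∀ i, IdentDistrib (X i) (X 0) μ μ) {b v t : ℝ}
    (hb : ∀ i ω, |X i ω| ≤ b) (hmean : μ[X 0] = 0) (hvar : μ[X 0 ^ 2] ≤ v) (ht : 0 ≤ t)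
    (n : ℕ) (ε : ℝ) :
    μ.real {ω | ε ≤ |∑ i ∈ range n, X i ω|} ≤
      2 * exp (n * (t ^ 2 * v * exp (t * b)) - t * ε) := by
  have hupper := measureReal_sum_ge_le_of_iIndepFun hindep hmeas hident hb hmean hvar ht n ε
  have hlower := measureReal_sum_ge_le_of_iIndepFun (X := fun i ω => -X i ω)
    (hindep.comp (fun _ => Neg.neg) fun _ => measurable_neg) (fun i => (hmeas i).neg)
    (fun i => (hident i).comp measurable_neg) (fun i ω => (abs_neg (X i ω)).trans_le (hb i ω))
    (by simpa only [integral_neg, neg_eq_zero] using hmean)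
    (by simpa only [Pi.pow_apply, neg_sq] using hvar) ht n ε
  calc μ.real {ω | ε ≤ |∑ i ∈ range n, X i ω|}
      ≤ μ.real ({ω | ε ≤ ∑ i ∈ range n, X i ω} ∪ {ω | ε ≤ ∑ i ∈ range n, -X i ω}) := by
        refine measureReal_mono fun ω (hω : ε ≤ |_|) => ?_
        simpa only [mem_union, mem_ofPred_eq, sum_neg_distrib] using le_abs.1 hω
    _ ≤ _ := measureReal_union_le _ _
    _ ≤ 2 * exp (n * (t ^ 2 * v * exp (t * b)) - t * ε) := by linarith

theorem integrable_sq_of_measureReal_abs_gt_le {g : Ω → ℝ} (hg : Measurable g) {a β : ℝ}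
    (ha : 0 < a) (hβ : 2 < β) (htail : ∀ u, a ≤ u → μ.real {ω | u < |g ω|} ≤ u ^ (-β)) :
    Integrable (g ^ 2) μ := by
  have hg2 : Measurable (g ^ 2) := hg.pow_const 2
  have hnonneg : 0 ≤ᵐ[μ] g ^ 2 := ae_of_all _ fun ω => sq_nonneg (g ω)
  refine ⟨hg2.aestronglyMeasurable, ?_⟩
  rw [hasFiniteIntegral_iff_ofReal hnonneg, lintegral_eq_lintegral_meas_lt μ hnonneg
    hg2.aemeasurable, ← Ioc_union_Ioi_eq_Ioi (sq_nonneg a),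
    lintegral_union measurableSet_Ioi Ioc_disjoint_Ioi_same]
  refine ENNReal.add_lt_top.2 ⟨?_, ?_⟩
  · calc ∫⁻ t in Ioc 0 (a ^ 2), μ {ω | t < (g ^ 2) ω}
        ≤ ∫⁻ _ in Ioc 0 (a ^ 2), 1 := lintegral_mono fun _ => prob_le_one
      _ < ⊤ := by simp
  · have hint : IntegrableOn (fun t : ℝ => t ^ (-(β / 2))) (Ioi (a ^ 2)) :=
      integrableOn_Ioi_rpow_of_lt (by linarith) (by positivity)
    have hfin := hint.2
    rw [hasFiniteIntegral_iff_ofReal (ae_restrict_of_forall_mem measurableSet_Ioi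
      fun t ht => rpow_nonneg ((sq_nonneg a).trans (le_of_lt ht)) _)] at hfin
    refine lt_of_le_of_lt (setLIntegral_mono' measurableSet_Ioi fun t (ht : a ^ 2 < t) => ?_) hfin
    have ht0 : 0 < t := (by positivity : (0 : ℝ) < a ^ 2).trans ht
    have hset : {ω | t < (g ^ 2) ω} = {ω | √t < |g ω|} := by
      ext ω
      rw [mem_ofPred_eq, mem_ofPred_eq, ← sqrt_sq_eq_abs, sqrt_lt_sqrt_iff ht0.le, Pi.pow_apply]
    have hsqrt : √t ^ (-β) = t ^ (-(β / 2)) := by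
      rw [sqrt_eq_rpow, ← rpow_mul ht0.le]
      ring_nf
    rw [hset, ← ofReal_measureReal, ← hsqrt]
    exact ENNReal.ofReal_le_ofReal (htail _ ((lt_sqrt ha.le).2 ht).le)

theorem integral_sq_truncAt_sub_integral_le {X : Ω → ℝ} (hX : Measurable X)
    (hsq : Integrable (X ^ 2) μ) (y : ℝ) :
    μ[fun ω => (truncAt y (X ω) - μ[fun ω => truncAt y (X ω)]) ^ 2] ≤ μ[X ^ 2] := by
  have hT : Measurable fun ω => truncAt y (X ω) := (measurable_truncAt y).comp hX
  rw [← variance_eq_integral hT.aemeasurable]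
  exact (variance_le_expectation_sq hT.aestronglyMeasurable).trans
    (integral_mono_of_nonneg (ae_of_all _ fun ω => sq_nonneg _) hsq
      (ae_of_all _ fun ω => sq_truncAt_le y (X ω)))

theorem measureReal_abs_sum_truncAt_sub_ge_le {ξ : ℕ → Ω → ℝ} (hmeas : ∀ i, Measurable (ξ i))
    (hindep : iIndepFun ξ μ) (hident : ∀ i, IdentDistrib (ξ i) (ξ 0) μ μ)
    (hsq : Integrable (ξ 0 ^ 2) μ) {y t : ℝ} (hy : 0 ≤ y) (ht : 0 ≤ t) (n : ℕ) (ε : ℝ) :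
    μ.real {ω | ε ≤ |∑ i ∈ range n, (truncAt y (ξ i ω) - μ[fun ω => truncAt y (ξ 0 ω)])|} ≤
      2 * exp (n * (t ^ 2 * μ[ξ 0 ^ 2] * exp (t * (2 * y))) - t * ε) := by
  set m := μ[fun ω => truncAt y (ξ 0 ω)]
  have hg : Measurable fun r => truncAt y r - m := (measurable_truncAt y).sub_const m
  have hm : |m| ≤ y := by
    simpa only [norm_eq_abs, probReal_univ, mul_one] using
      norm_integral_le_of_norm_le_const (μ := μ) (f := fun ω => truncAt y (ξ 0 ω))
        (ae_of_all _ fun ω => abs_truncAt_le hy (ξ 0 ω))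
  refine measureReal_abs_sum_ge_le_of_iIndepFun (X := fun i ω => truncAt y (ξ i ω) - m)
    (hindep.comp _ fun _ => hg) (fun i => hg.comp (hmeas i)) (fun i => (hident i).comp hg)
    (fun i ω => ?_) ?_ (integral_sq_truncAt_sub_integral_le (hmeas 0) hsq y) ht n ε
  · linarith [abs_sub (truncAt y (ξ i ω)) m, abs_truncAt_le hy (ξ i ω)]
  · rw [integral_sub (integrable_truncAt_comp (hmeas 0) hy) (integrable_const m), integral_const]
    simp [m]

theorem measureReal_abs_sum_truncAt_sub_ge_le_two_mul_rpow_neg {ξ : ℕ → Ω → ℝ}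
    (hmeas : ∀ i, Measurable (ξ i)) (hindep : iIndepFun ξ μ)
    (hident : ∀ i, IdentDistrib (ξ i) (ξ 0) μ μ) (hsq : Integrable (ξ 0 ^ 2) μ) {β u y : ℝ}
    {n : ℕ} (hβ : 0 < β) (hu : 1 ≤ u) (huσ : 32 * β * μ[ξ 0 ^ 2] ≤ u) (hy : 0 < y)
    (hn : (16 * β * y) ^ 2 = u ^ 2 * n) :
    μ.real {ω | 16 * β * y / 2 ≤
      |∑ i ∈ range n, (truncAt y (ξ i ω) - μ[fun ω => truncAt y (ξ 0 ω)])|} ≤ 2 * u ^ (-β) := by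
  set t := log u / (4 * y)
  have ht : t * y = log u / 4 := by simp only [t]; field_simp
  have hσ2 : 0 ≤ μ[ξ 0 ^ 2] := integral_nonneg fun ω => sq_nonneg (ξ 0 ω)
  have hpow : u ^ (-β) = exp (-(β * log u)) := by rw [rpow_def_of_pos (by linarith)]; ring_nf
  refine (measureReal_abs_sum_truncAt_sub_ge_le (t := t) hmeas hindep hident hsq hy.le
    (div_nonneg (log_nonneg hu) (by positivity)) n _).trans ?_
  rw [hpow]
  gcongr
  exact chernoff_exponent_le hβ hσ2 hu huσ hn ht

theorem measureReal_abs_normalized_sum_gt_le {ξ : ℕ → Ω → ℝ} (hmeas : ∀ i, Measurable (ξ i))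
    (hindep : iIndepFun ξ μ) (hident : ∀ i, IdentDistrib (ξ i) (ξ 0) μ μ)
    (hint : Integrable (ξ 0) μ) (hcent : μ[ξ 0] = 0) (hsq : Integrable (ξ 0 ^ 2) μ) {β : ℝ}
    (hβ : 2 ≤ β) (htail : ∀ y, exp 1 ≤ y → μ.real {ω | y < |ξ 0 ω|} ≤ y ^ (-β)) {u : ℝ}
    (hu : 16 * β * exp 1 + 32 * β * μ[ξ 0 ^ 2] ≤ u) (n : ℕ) :
    μ.real {ω | u < |(√n)⁻¹ * ∑ i ∈ range n, ξ i ω|} ≤ ((16 * β) ^ β + 2) * u ^ (-β) := by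
  set σ2 := μ[ξ 0 ^ 2]
  have hσ2 : 0 ≤ σ2 := integral_nonneg fun ω => sq_nonneg (ξ 0 ω)
  have hβ0 : 0 < β := by linarith
  have hue : 16 * β * exp 1 ≤ u := by nlinarith
  have huσ : 32 * β * σ2 ≤ u := by nlinarith [exp_pos 1]
  have hu1 : 1 ≤ u := by nlinarith [add_one_le_exp (1 : ℝ)]
  have hu0 : 0 < u := by linarith
  rcases n.eq_zero_or_pos with rfl | hn
  · simp only [Nat.cast_zero, sqrt_zero, inv_zero, zero_mul, abs_zero, not_lt.2 hu0.le,
      ofPred_false, measureReal_empty]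
    positivity
  set x := u * √n
  have hsn : 1 ≤ √(n : ℝ) := one_le_sqrt.2 (by exact_mod_cast hn)
  have hux : u ≤ x := le_mul_of_one_le_right hu0.le hsn
  have hxn : x ^ 2 = u ^ 2 * n := by rw [mul_pow, sq_sqrt n.cast_nonneg]
  set y := x / (16 * β)
  have hxy : 16 * β * y = x := by simp only [y]; field_simp
  have hy : exp 1 ≤ y := by
    rw [le_div_iff₀ (by positivity)]
    linarith
  have hy0 : 0 < y := (exp_pos 1).trans_le hy
  set m := μ[fun ω => truncAt y (ξ 0 ω)]
  have hm : n * |m| ≤ x / 2 :=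
    hxy ▸ natCast_mul_abs_integral_truncAt_le (hmeas 0) hint hcent hsq hβ0 hu1 huσ hy0 (hxy ▸ hxn)
  have hnormalized : {ω | u < |(√n)⁻¹ * ∑ i ∈ range n, ξ i ω|} ⊆
      {ω | x < |∑ i ∈ range n, ξ i ω|} := fun ω (hω : u < _) => by
    rwa [abs_mul, abs_inv, abs_of_pos (by positivity : 0 < √(n : ℝ)),
      lt_inv_mul_iff₀ (by positivity), mul_comm] at hω
  have hsingle : μ.real (⋃ i ∈ range n, {ω | y < |ξ i ω|}) ≤ (16 * β) ^ β * u ^ (-β) :=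
    calc μ.real (⋃ i ∈ range n, {ω | y < |ξ i ω|}) ≤ n * μ.real {ω | y < |ξ 0 ω|} :=
          measureReal_biUnion_abs_gt_le hident n y
      _ ≤ n * y ^ (-β) := by gcongr; exact htail y hy
      _ ≤ (16 * β) ^ β * u ^ (-β) := natCast_mul_rpow_neg_le hβ (by positivity) hu0 hn
  have hsum := measureReal_abs_sum_truncAt_sub_ge_le_two_mul_rpow_neg hmeas hindep hident hsq
    hβ0 hu1 huσ hy0 (hxy ▸ hxn)
  rw [hxy] at hsum
  calc μ.real {ω | u < |(√n)⁻¹ * ∑ i ∈ range n, ξ i ω|}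
      ≤ μ.real ((⋃ i ∈ range n, {ω | y < |ξ i ω|}) ∪
          {ω | x / 2 ≤ |∑ i ∈ range n, (truncAt y (ξ i ω) - m)|}) :=
        measureReal_mono (hnormalized.trans (setOf_lt_abs_sum_subset hm))
    _ ≤ _ := measureReal_union_le _ _
    _ ≤ ((16 * β) ^ β + 2) * u ^ (-β) := by linarith

theorem exists_measureReal_abs_normalized_sum_gt_le {ξ : ℕ → Ω → ℝ}
    (hmeas : ∀ i, Measurable (ξ i)) (hindep : iIndepFun ξ μ)
    (hident : ∀ i, IdentDistrib (ξ i) (ξ 0) μ μ) (hint : Integrable (ξ 0) μ)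
    (hcent : μ[ξ 0] = 0) (hsq : Integrable (ξ 0 ^ 2) μ) {β : ℝ} (hβ : 2 ≤ β)
    (htail : ∀ y, exp 1 ≤ y → μ.real {ω | y < |ξ 0 ω|} ≤ y ^ (-β)) :
    ∃ C > 0, ∀ n : ℕ, ∀ u > 0,
      μ.real {ω | u < |(√n)⁻¹ * ∑ i ∈ range n, ξ i ω|} ≤ C * u ^ (-β) := by
  set u₀ := 16 * β * exp 1 + 32 * β * μ[ξ 0 ^ 2]
  have hu₀ : 0 < u₀ := by
    have : 0 ≤ μ[ξ 0 ^ 2] := integral_nonneg fun ω => sq_nonneg (ξ 0 ω)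
    positivity
  refine ⟨u₀ ^ β + (16 * β) ^ β + 2, by positivity, fun n u hu => ?_⟩
  rcases le_or_gt u₀ u with hlarge | hsmall
  · refine (measureReal_abs_normalized_sum_gt_le hmeas hindep hident hint hcent hsq hβ htail
      hlarge n).trans ?_
    gcongr
    linarith [rpow_nonneg hu₀.le β]
  · calc μ.real {ω | u < |(√n)⁻¹ * ∑ i ∈ range n, ξ i ω|} ≤ 1 := measureReal_le_one
      _ ≤ u₀ ^ β * u ^ (-β) := by
        rw [rpow_neg hu.le, ← div_eq_mul_inv, ← div_rpow hu₀.le hu.le]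
        exact one_le_rpow ((one_le_div hu).2 hsmall.le) (by linarith)
      _ ≤ (u₀ ^ β + (16 * β) ^ β + 2) * u ^ (-β) := by
        gcongr
        linarith [rpow_nonneg (by positivity : (0 : ℝ) ≤ 16 * β) β]

end

theorem stmt_17 {Ω : Type*} [MeasurableSpace Ω] (μ : Measure Ω) [IsProbabilityMeasure μ]
    (β : ℝ) (hβ : 2 < β)
    (ξ : ℕ → Ω → ℝ) (hmeas : ∀ i, Measurable (ξ i))
    (hindep : iIndepFun ξ μ)
    (hident : ∀ i, IdentDistrib (ξ i) (ξ 0) μ μ)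
    (hint : Integrable (ξ 0) μ) (hcent : ∫ ω, ξ 0 ω ∂μ = 0)
    (htail : ∀ u : ℝ, Real.exp 1 ≤ u →
      (μ {ω | u < |ξ 0 ω|}).toReal ≤ u ^ (-β) * (Real.log u)⁻¹) :
    ∃ C > (0 : ℝ), ∀ n : ℕ, ∀ u : ℝ, Real.exp (Real.exp 1) ≤ u →
      (μ {ω | u < |(Real.sqrt n)⁻¹ * ∑ i ∈ Finset.range n, ξ i ω|}).toReal
        ≤ C * u ^ (-β) * Real.log (Real.log u) := by
  have htail' (y : ℝ) (hy : exp 1 ≤ y) : μ.real {ω | y < |ξ 0 ω|} ≤ y ^ (-β) :=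
    (htail y hy).trans (mul_le_of_le_one_right (rpow_nonneg ((exp_pos 1).le.trans hy) _)
      (inv_le_one_of_one_le₀ ((le_log_iff_exp_le ((exp_pos 1).trans_le hy)).2 hy)))
  have hsq := integrable_sq_of_measureReal_abs_gt_le (hmeas 0) (exp_pos 1) hβ htail'
  obtain ⟨C, hC, hbound⟩ := exists_measureReal_abs_normalized_sum_gt_le hmeas hindep hident hint
    hcent hsq hβ.le htail'
  refine ⟨C, hC, fun n u hu => ?_⟩
  have hu0 : 0 < u := (exp_pos _).trans_le hu
  have hlog : exp 1 ≤ log u := (le_log_iff_exp_le hu0).2 hu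
  have hloglog : 1 ≤ log (log u) := (le_log_iff_exp_le ((exp_pos 1).trans_le hlog)).2 hlog
  exact (hbound n u hu0).trans (le_mul_of_one_le_right (by positivity) hloglog)
end
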